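/- In the Picard lattice ℤL ⊕ ℤE_1 ⊕ ℤE_2 ⊕ ℤE_3 with −K = 3L − E_1 − E_2 − E_3, the dual cone of Cone(L, L−E_1, L−E_2, L−E_3) with respect to the intersection form is generated by the classes E_1, E_2, E_3, L−E_1−E_2, L−E_1−E_3, L−E_2−E_3, and L−E_1−E_2−E_3. -/
import Mathlib


/-- Intersection form on `Pic ⊗ ℚ = ℚL ⊕ ℚE_1 ⊕ ℚE_2 ⊕ ℚE_3` for the blowup of ℙ²
at three collinear points: a class `aL + Σ c_i E_i` is encoded as `(a, c)`. -/
def interForm (x y : ℚ × (Fin 3 → ℚ)) : ℚ :=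
  x.1 * y.1 - ∑ i, x.2 i * y.2 i

/-- The class `L`. -/
def Lclass : ℚ × (Fin 3 → ℚ) := (1, 0)

/-- The class `E_i`. -/
def Eclass (i : Fin 3) : ℚ × (Fin 3 → ℚ) := (0, Pi.single i 1)

/-- The cone spanned by a finite family of classes. -/
def coneOf {k : ℕ} (v : Fin k → ℚ × (Fin 3 → ℚ)) : Set (ℚ × (Fin 3 → ℚ)) :=
  {x | ∃ c : Fin k → ℚ, (∀ i, 0 ≤ c i) ∧ x = ∑ i, c i • v i}

lemma cv5 {α : Type*} (a b c d e f g : α) : ![a,b,c,d,e,f,g] 5 = f := rfl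
lemma cv6 {α : Type*} (a b c d e f g : α) : ![a,b,c,d,e,f,g] 6 = g := rfl
lemma Eclass0 : Eclass 0 = (0, ![1,0,0]) := by
  unfold Eclass; congr 1; ext i; fin_cases i <;> simp
lemma Eclass1 : Eclass 1 = (0, ![0,1,0]) := by
  unfold Eclass; congr 1; ext i; fin_cases i <;> simp
lemma Eclass2 : Eclass 2 = (0, ![0,0,1]) := by
  unfold Eclass; congr 1; ext i; fin_cases i <;> simp

-- key construction lemma
lemma key (a : ℚ) (v : Fin 3 → ℚ) (h0 : 0 ≤ a) (h1 : 0 ≤ a + v 0) (h2 : 0 ≤ a + v 1)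
    (h3 : 0 ≤ a + v 2) :
    ∃ c : Fin 7 → ℚ, (∀ i, 0 ≤ c i) ∧ ((a, v) : ℚ × (Fin 3 → ℚ)) =
      ∑ i, c i • ![Eclass 0, Eclass 1, Eclass 2,
        Lclass - Eclass 0 - Eclass 1, Lclass - Eclass 0 - Eclass 2,
        Lclass - Eclass 1 - Eclass 2, Lclass - Eclass 0 - Eclass 1 - Eclass 2] i := by
  set m0 := max (-(v 0)) 0 with hm0def
  set m1 := max (-(v 1)) 0 with hm1def
  set m2 := max (-(v 2)) 0 with hm2def
  have hm0a : 0 ≤ m0 := le_max_right _ _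
  have hm0b : -(v 0) ≤ m0 := le_max_left _ _
  have hm0c : m0 ≤ a := max_le (by linarith) h0
  have hm1a : 0 ≤ m1 := le_max_right _ _
  have hm1b : -(v 1) ≤ m1 := le_max_left _ _
  have hm1c : m1 ≤ a := max_le (by linarith) h0
  have hm2a : 0 ≤ m2 := le_max_right _ _
  have hm2b : -(v 2) ≤ m2 := le_max_left _ _
  have hm2c : m2 ≤ a := max_le (by linarith) h0
  clear_value m0 m1 m2
  clear hm0def hm1def hm2def
  have veq : v = ![v 0, v 1, v 2] := by ext i; fin_cases i <;> rfl
  rw [veq]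
  rcases le_total m0 m1 with o1 | o1 <;> rcases le_total m1 m2 with o2 | o2 <;>
    rcases le_total m0 m2 with o3 | o3
  · refine ⟨![v 0 + a - m1 + m0, v 1 + a - m2 + m1, v 2 + a, 0, m2 - m1, m1 - m0, m0 + a - m2], ?_, ?_⟩
    · intro i; fin_cases i <;> simp [cv5, cv6] <;> linarith
    · simp only [Fin.sum_univ_seven, Lclass, Eclass0, Eclass1, Eclass2,
        Matrix.cons_val_zero, Matrix.cons_val_one, Matrix.head_cons, Matrix.cons_val_two,
        Matrix.cons_val_three, Matrix.cons_val_four, Matrix.tail_cons, cv5, cv6,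
        Prod.smul_mk, Prod.mk_add_mk, Prod.mk_sub_mk, smul_eq_mul, Prod.mk.injEq]
      refine ⟨by ring, ?_⟩
      ext i
      fin_cases i <;> simp [Matrix.cons_val_zero, Matrix.cons_val_one, Matrix.head_cons] <;> ring
  · refine ⟨![v 0 + a - m1 + m0, v 1 + a - m2 + m1, v 2 + a, 0, m2 - m1, m1 - m0, m0 + a - m2], ?_, ?_⟩
    · intro i; fin_cases i <;> simp [cv5, cv6] <;> linarith
    · simp only [Fin.sum_univ_seven, Lclass, Eclass0, Eclass1, Eclass2,
        Matrix.cons_val_zero, Matrix.cons_val_one, Matrix.head_cons, Matrix.cons_val_two,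
        Matrix.cons_val_three, Matrix.cons_val_four, Matrix.tail_cons, cv5, cv6,
        Prod.smul_mk, Prod.mk_add_mk, Prod.mk_sub_mk, smul_eq_mul, Prod.mk.injEq]
      refine ⟨by ring, ?_⟩
      ext i
      fin_cases i <;> simp [Matrix.cons_val_zero, Matrix.cons_val_one, Matrix.head_cons] <;> ring
  · refine ⟨![v 0 + a - m2 + m0, v 1 + a, v 2 + a - m1 + m2, m1 - m2, 0, m2 - m0, m0 + a - m1], ?_, ?_⟩
    · intro i; fin_cases i <;> simp [cv5, cv6] <;> linarith
    · simp only [Fin.sum_univ_seven, Lclass, Eclass0, Eclass1, Eclass2,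
        Matrix.cons_val_zero, Matrix.cons_val_one, Matrix.head_cons, Matrix.cons_val_two,
        Matrix.cons_val_three, Matrix.cons_val_four, Matrix.tail_cons, cv5, cv6,
        Prod.smul_mk, Prod.mk_add_mk, Prod.mk_sub_mk, smul_eq_mul, Prod.mk.injEq]
      refine ⟨by ring, ?_⟩
      ext i
      fin_cases i <;> simp [Matrix.cons_val_zero, Matrix.cons_val_one, Matrix.head_cons] <;> ring
  · refine ⟨![v 0 + a - m1 + m0, v 1 + a, v 2 + a - m0 + m2, m0 - m2, 0, m1 - m0, m2 + a - m1], ?_, ?_⟩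
    · intro i; fin_cases i <;> simp [cv5, cv6] <;> linarith
    · simp only [Fin.sum_univ_seven, Lclass, Eclass0, Eclass1, Eclass2,
        Matrix.cons_val_zero, Matrix.cons_val_one, Matrix.head_cons, Matrix.cons_val_two,
        Matrix.cons_val_three, Matrix.cons_val_four, Matrix.tail_cons, cv5, cv6,
        Prod.smul_mk, Prod.mk_add_mk, Prod.mk_sub_mk, smul_eq_mul, Prod.mk.injEq]
      refine ⟨by ring, ?_⟩
      ext i
      fin_cases i <;> simp [Matrix.cons_val_zero, Matrix.cons_val_one, Matrix.head_cons] <;> ring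
  · refine ⟨![v 0 + a - m2 + m0, v 1 + a - m0 + m1, v 2 + a, 0, m0 - m1, m2 - m0, m1 + a - m2], ?_, ?_⟩
    · intro i; fin_cases i <;> simp [cv5, cv6] <;> linarith
    · simp only [Fin.sum_univ_seven, Lclass, Eclass0, Eclass1, Eclass2,
        Matrix.cons_val_zero, Matrix.cons_val_one, Matrix.head_cons, Matrix.cons_val_two,
        Matrix.cons_val_three, Matrix.cons_val_four, Matrix.tail_cons, cv5, cv6,
        Prod.smul_mk, Prod.mk_add_mk, Prod.mk_sub_mk, smul_eq_mul, Prod.mk.injEq]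
      refine ⟨by ring, ?_⟩
      ext i
      fin_cases i <;> simp [Matrix.cons_val_zero, Matrix.cons_val_one, Matrix.head_cons] <;> ring
  · refine ⟨![v 0 + a, v 1 + a - m2 + m1, v 2 + a - m0 + m2, m0 - m2, m2 - m1, 0, m1 + a - m0], ?_, ?_⟩
    · intro i; fin_cases i <;> simp [cv5, cv6] <;> linarith
    · simp only [Fin.sum_univ_seven, Lclass, Eclass0, Eclass1, Eclass2,
        Matrix.cons_val_zero, Matrix.cons_val_one, Matrix.head_cons, Matrix.cons_val_two,
        Matrix.cons_val_three, Matrix.cons_val_four, Matrix.tail_cons, cv5, cv6,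
        Prod.smul_mk, Prod.mk_add_mk, Prod.mk_sub_mk, smul_eq_mul, Prod.mk.injEq]
      refine ⟨by ring, ?_⟩
      ext i
      fin_cases i <;> simp [Matrix.cons_val_zero, Matrix.cons_val_one, Matrix.head_cons] <;> ring
  · refine ⟨![v 0 + a, v 1 + a - m0 + m1, v 2 + a - m1 + m2, m1 - m2, m0 - m1, 0, m2 + a - m0], ?_, ?_⟩
    · intro i; fin_cases i <;> simp [cv5, cv6] <;> linarith
    · simp only [Fin.sum_univ_seven, Lclass, Eclass0, Eclass1, Eclass2,
        Matrix.cons_val_zero, Matrix.cons_val_one, Matrix.head_cons, Matrix.cons_val_two,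
        Matrix.cons_val_three, Matrix.cons_val_four, Matrix.tail_cons, cv5, cv6,
        Prod.smul_mk, Prod.mk_add_mk, Prod.mk_sub_mk, smul_eq_mul, Prod.mk.injEq]
      refine ⟨by ring, ?_⟩
      ext i
      fin_cases i <;> simp [Matrix.cons_val_zero, Matrix.cons_val_one, Matrix.head_cons] <;> ring
  · refine ⟨![v 0 + a, v 1 + a - m0 + m1, v 2 + a - m1 + m2, m1 - m2, m0 - m1, 0, m2 + a - m0], ?_, ?_⟩
    · intro i; fin_cases i <;> simp [cv5, cv6] <;> linarith
    · simp only [Fin.sum_univ_seven, Lclass, Eclass0, Eclass1, Eclass2,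
        Matrix.cons_val_zero, Matrix.cons_val_one, Matrix.head_cons, Matrix.cons_val_two,
        Matrix.cons_val_three, Matrix.cons_val_four, Matrix.tail_cons, cv5, cv6,
        Prod.smul_mk, Prod.mk_add_mk, Prod.mk_sub_mk, smul_eq_mul, Prod.mk.injEq]
      refine ⟨by ring, ?_⟩
      ext i
      fin_cases i <;> simp [Matrix.cons_val_zero, Matrix.cons_val_one, Matrix.head_cons] <;> ring

/-- The dual cone of `Cone(L, L-E_1, L-E_2, L-E_3)` with respect to the intersection
form is generated by `E_1, E_2, E_3`, `L-E_1-E_2`, `L-E_1-E_3`, `L-E_2-E_3` and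
`L-E_1-E_2-E_3`. -/
theorem dual_cone_deg6_collinear :
    {D : ℚ × (Fin 3 → ℚ) |
        ∀ H ∈ coneOf ![Lclass, Lclass - Eclass 0, Lclass - Eclass 1, Lclass - Eclass 2],
          0 ≤ interForm D H} =
      coneOf ![Eclass 0, Eclass 1, Eclass 2,
        Lclass - Eclass 0 - Eclass 1, Lclass - Eclass 0 - Eclass 2,
        Lclass - Eclass 1 - Eclass 2, Lclass - Eclass 0 - Eclass 1 - Eclass 2] := by
  ext ⟨a, v⟩
  simp only [Set.mem_setOf_eq]
  constructor
  · intro h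
    have h0 : 0 ≤ a := by
      have := h Lclass ⟨![1,0,0,0], by intro i; fin_cases i <;> norm_num, by
        simp [Fin.sum_univ_four]⟩
      simpa [interForm, Lclass] using this
    have h1 : 0 ≤ a + v 0 := by
      have := h (Lclass - Eclass 0) ⟨![0,1,0,0], by intro i; fin_cases i <;> norm_num, by
        simp [Fin.sum_univ_four]⟩
      simpa [interForm, Lclass, Eclass, Fin.sum_univ_three, Pi.single_apply] using this
    have h2 : 0 ≤ a + v 1 := by
      have := h (Lclass - Eclass 1) ⟨![0,0,1,0], by intro i; fin_cases i <;> norm_num, by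
        simp [Fin.sum_univ_four]⟩
      simpa [interForm, Lclass, Eclass, Fin.sum_univ_three, Pi.single_apply] using this
    have h3 : 0 ≤ a + v 2 := by
      have := h (Lclass - Eclass 2) ⟨![0,0,0,1], by intro i; fin_cases i <;> norm_num, by
        simp [Fin.sum_univ_four]⟩
      simpa [interForm, Lclass, Eclass, Fin.sum_univ_three, Pi.single_apply] using this
    exact key a v h0 h1 h2 h3
  · rintro ⟨c, hc, hx⟩ H ⟨d, hd, hH⟩
    rw [hx, hH]
    simp only [interForm, Fin.sum_univ_seven, Fin.sum_univ_four, Fin.sum_univ_three,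
      Lclass, Eclass0, Eclass1, Eclass2,
      Matrix.cons_val_zero, Matrix.cons_val_one, Matrix.head_cons, Matrix.cons_val_two,
      Matrix.cons_val_three, Matrix.cons_val_four, Matrix.tail_cons, cv5, cv6,
      Prod.smul_mk, Prod.mk_add_mk, Prod.mk_sub_mk, Prod.fst_add, Prod.snd_add,
      Prod.fst_sub, Prod.snd_sub, Prod.smul_fst, Prod.smul_snd, smul_eq_mul,
      Pi.add_apply, Pi.sub_apply, Pi.smul_apply, Pi.zero_apply,
      Prod.fst_zero, Prod.snd_zero]
    norm_num
    nlinarith [mul_nonneg (hc 0) (hd 1), mul_nonneg (hc 1) (hd 2), mul_nonneg (hc 2) (hd 3),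
      mul_nonneg (hc 3) (hd 0), mul_nonneg (hc 4) (hd 0), mul_nonneg (hc 5) (hd 0),
      mul_nonneg (hc 6) (hd 0), mul_nonneg (hc 3) (hd 3), mul_nonneg (hc 4) (hd 2),
      mul_nonneg (hc 5) (hd 1), mul_nonneg (hc 3) (hd 1), mul_nonneg (hc 3) (hd 2),
      mul_nonneg (hc 4) (hd 1), mul_nonneg (hc 4) (hd 3), mul_nonneg (hc 5) (hd 2),
      mul_nonneg (hc 5) (hd 3), mul_nonneg (hc 6) (hd 1), mul_nonneg (hc 6) (hd 2),
      mul_nonneg (hc 6) (hd 3), mul_nonneg (hc 0) (hd 0), mul_nonneg (hc 1) (hd 0),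
      mul_nonneg (hc 2) (hd 0), mul_nonneg (hc 0) (hd 2), mul_nonneg (hc 0) (hd 3),
      mul_nonneg (hc 1) (hd 1), mul_nonneg (hc 1) (hd 3), mul_nonneg (hc 2) (hd 1),
      mul_nonneg (hc 2) (hd 2)]
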